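/- arXiv:2107.13139 — 2 statements merged into one kernel-verified Lean document; each statement's English description precedes it below -/
import Mathlib

section
/- Let N ≥ 1. For integers q, a, b with q odd, 1 ≤ b ≤ q ≤ N^{2/3}, gcd(b,q) = 1, and 0 ≤ a ≤ q, define M(q,a,b) = {(x₁,x₂) ∈ [0,N] × [0,N²] : |x₁ − (a/q)N| ≤ 10^{-10} and |x₂ − (b/q)N²| ≤ 10^{-10}}. Then for any two distinct tuples (q,a,b) ≠ (q',a',b'), both satisfying the above conditions, the sets M(q,a,b) and M(q',a',b') are disjoint. -/
/-!
Two boxes can only meet if their centres are within `2 · 10⁻¹⁰` in both coordinates.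
If `b/q ≠ b'/q'`, the second coordinates of the centres differ by at least `N²/(qq') ≥ 1`;
otherwise coprimality forces `(q, b) = (q', b')`, so `a ≠ a'` and the first coordinates differ by
at least `N/q ≥ 1`.
-/

open Set

noncomputable section

/-- The major arc box `M(q,a,b)` in `[0,N] × [0,N²]`. -/
def Mqab (N : ℝ) (q a b : ℤ) : Set (ℝ × ℝ) :=
  {p | p ∈ Icc ((0 : ℝ), (0 : ℝ)) (N, N ^ 2) ∧
    |p.1 - ((a : ℝ) / (q : ℝ)) * N| ≤ ((10 : ℝ) ^ 10)⁻¹ ∧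
    |p.2 - ((b : ℝ) / (q : ℝ)) * N ^ 2| ≤ ((10 : ℝ) ^ 10)⁻¹}

/-- The condition on the tuple `(q,a,b)`: `q` odd, `1 ≤ b ≤ q ≤ N^{2/3}`, `gcd(b,q) = 1`,
`0 ≤ a ≤ q`. -/
def condQAB (N : ℝ) (q a b : ℤ) : Prop :=
  Odd q ∧ 1 ≤ b ∧ b ≤ q ∧ (q : ℝ) ≤ N ^ ((2 : ℝ)/3) ∧ Int.gcd b q = 1 ∧ 0 ≤ a ∧ a ≤ q

lemma abs_sub_le_two_mul_of_abs_sub_le {x c d e : ℝ} (hc : |x - c| ≤ e) (hd : |x - d| ≤ e) :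
    |c - d| ≤ 2 * e := by
  have := abs_sub_le c x d
  rw [abs_sub_comm c x] at this
  linarith

lemma disjoint_Mqab_of_separated {N : ℝ} {q a b q' a' b' : ℤ}
    (hsep : 2 * ((10 : ℝ) ^ 10)⁻¹ < |(a : ℝ) / q * N - (a' : ℝ) / q' * N| ∨
      2 * ((10 : ℝ) ^ 10)⁻¹ < |(b : ℝ) / q * N ^ 2 - (b' : ℝ) / q' * N ^ 2|) :
    Disjoint (Mqab N q a b) (Mqab N q' a' b') := by
  rw [Set.disjoint_left]
  rintro ⟨x, y⟩ ⟨-, hx, hy⟩ ⟨-, hx', hy'⟩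
  rcases hsep with hsep | hsep
  · exact (abs_sub_le_two_mul_of_abs_sub_le hx hx').not_gt hsep
  · exact (abs_sub_le_two_mul_of_abs_sub_le hy hy').not_gt hsep

lemma one_div_le_abs_div_sub_div {q a a' : ℤ} (hq : 0 < q) (ha : a ≠ a') :
    1 / (q : ℝ) ≤ |(a : ℝ) / q - a' / q| := by
  rw [← sub_div, abs_div, abs_of_pos (by exact_mod_cast hq : (0 : ℝ) < q)]
  gcongr
  exact_mod_cast Int.one_le_abs (sub_ne_zero.mpr ha)

lemma one_div_mul_le_abs_div_sub_div {q b q' b' : ℤ} (hq : 0 < q) (hq' : 0 < q')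
    (hne : (b : ℝ) / q ≠ b' / q') : 1 / ((q : ℝ) * q') ≤ |(b : ℝ) / q - b' / q'| := by
  have hqR : (0 : ℝ) < q := by exact_mod_cast hq
  have hqR' : (0 : ℝ) < q' := by exact_mod_cast hq'
  rw [div_sub_div _ _ hqR.ne' hqR'.ne', abs_div, abs_of_pos (mul_pos hqR hqR')]
  gcongr
  have hnum : b * q' - q * b' ≠ 0 := by
    intro h0
    apply hne
    rw [div_eq_div_iff hqR.ne' hqR'.ne']
    exact_mod_cast (sub_eq_zero.mp h0).trans (mul_comm q b')
  exact_mod_cast Int.one_le_abs hnum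

lemma one_le_abs_mul_sub_mul {u v d M : ℝ} (hd : 0 < d) (hdM : d ≤ M) (huv : 1 / d ≤ |u - v|) :
    1 ≤ |u * M - v * M| := by
  rw [← sub_mul, abs_mul, abs_of_pos (hd.trans_le hdM)]
  calc 1 = 1 / d * d := by field_simp
    _ ≤ |u - v| * M := mul_le_mul huv hdM hd.le (abs_nonneg _)

lemma eq_of_div_eq_div_of_gcd_eq_one {q b q' b' : ℤ} (hq : 0 < q) (hq' : 0 < q')
    (hb : Int.gcd b q = 1) (hb' : Int.gcd b' q' = 1) (h : (b : ℝ) / q = b' / q') :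
    b = b' ∧ q = q' :=
  Rat.div_int_inj hq hq' hb hb' (by exact_mod_cast h)

namespace condQAB

variable {N : ℝ} {q a b : ℤ}

lemma den_pos (h : condQAB N q a b) : 0 < q := by
  obtain ⟨-, hb, hbq, -⟩ := h
  omega

lemma den_le (hN : 1 ≤ N) (h : condQAB N q a b) : (q : ℝ) ≤ N :=
  h.2.2.2.1.trans (Real.rpow_le_self_of_one_le hN (by norm_num))

lemma gcd_eq_one (h : condQAB N q a b) : Int.gcd b q = 1 :=
  h.2.2.2.2.1

end condQAB

/-- Distinct major arc boxes are disjoint. -/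
theorem statement7 (N : ℝ) (hN : 1 ≤ N) (q a b q' a' b' : ℤ)
    (h : condQAB N q a b) (h' : condQAB N q' a' b')
    (hne : (q, a, b) ≠ (q', a', b')) :
    Disjoint (Mqab N q a b) (Mqab N q' a' b') := by
  have hq : (0 : ℝ) < q := by exact_mod_cast h.den_pos
  have hwidth : 2 * ((10 : ℝ) ^ 10)⁻¹ < 1 := by norm_num
  apply disjoint_Mqab_of_separated
  by_cases hfrac : (b : ℝ) / q = b' / q'
  · obtain ⟨rfl, rfl⟩ :=
      eq_of_div_eq_div_of_gcd_eq_one h.den_pos h'.den_pos h.gcd_eq_one h'.gcd_eq_one hfrac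
    have ha : a ≠ a' := fun ha => hne (by rw [ha])
    exact .inl <| hwidth.trans_le <|
      one_le_abs_mul_sub_mul hq (h.den_le hN) (one_div_le_abs_div_sub_div h.den_pos ha)
  · have hqq' : (q : ℝ) * q' ≤ N ^ 2 := by
      rw [sq]
      exact mul_le_mul (h.den_le hN) (h'.den_le hN) (by exact_mod_cast h'.den_pos.le)
        (by linarith)
    exact .inr <| hwidth.trans_le <| one_le_abs_mul_sub_mul
      (mul_pos hq (by exact_mod_cast h'.den_pos)) hqq'
      (one_div_mul_le_abs_div_sub_div h.den_pos h'.den_pos hfrac)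

end
end

section
/- Let φ : ℝ² → [0,1] be a smooth function with supp φ ⊂ B_{1/2}(0). For r ≥ 1 set ψ_r(ξ) = r⁴ (φ(r·) * φ(r·))(ξ), so that ψ_r is supported in B_{1/r}(0) and ‖ψ_r‖_∞ ≤ C₁ r² for a constant C₁ depending only on φ. Then there is a constant C depending only on φ such that for every integer N ≥ 1 and every r with 1 ≤ r ≤ N, ∫_{B_2(0)} |Σ_{k=1}^N ψ_r(ξ − (k/N, k²/N²))|⁴ dξ ≤ C N⁴ r³. -/
open MeasureTheory Set

noncomputable section

/-- `ψ_r = r⁴ (φ(r·) * φ(r·))`. -/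
def psiR (φ : ℝ × ℝ → ℝ) (r : ℝ) (ξ : ℝ × ℝ) : ℝ :=
  r ^ 4 * ∫ y : ℝ × ℝ, φ (r • y) * φ (r • (ξ - y))


lemma volume_cball (p : ℝ×ℝ) (s : ℝ) (hs : 0 ≤ s) :
    (volume (Metric.closedBall p s)).toReal = (2*s)*(2*s) := by
  obtain ⟨a, b⟩ := p
  rw [← closedBall_prod_same, Measure.volume_eq_prod, Measure.prod_prod,
    Real.volume_closedBall, Real.volume_closedBall,
    ← ENNReal.ofReal_mul (by positivity), ENNReal.toReal_ofReal (by positivity)]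

section aux
variable {φ : ℝ × ℝ → ℝ} {r : ℝ}

lemma psiR_nonneg (hrange : ∀ x, φ x ∈ Icc (0 : ℝ) 1) (hr : 0 ≤ r) (ξ : ℝ × ℝ) :
    0 ≤ psiR φ r ξ :=
  mul_nonneg (pow_nonneg hr 4)
    (integral_nonneg fun y => mul_nonneg (hrange _).1 (hrange _).1)

lemma psiR_le (hrange : ∀ x, φ x ∈ Icc (0 : ℝ) 1)
    (hsupp : Function.support φ ⊆ Metric.ball 0 (1/2)) (hr : 1 ≤ r) (ξ : ℝ × ℝ) :
    psiR φ r ξ ≤ r ^ 2 := by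
  have hr0 : (0:ℝ) < r := lt_of_lt_of_le one_pos hr
  set B := Metric.closedBall ((0,0) : ℝ×ℝ) (1/(2*r)) with hB
  have hIle : (∫ y : ℝ × ℝ, φ (r • y) * φ (r • (ξ - y))) ≤
      ∫ y : ℝ × ℝ, B.indicator (fun _ => (1:ℝ)) y := by
    refine integral_mono_of_nonneg (Filter.Eventually.of_forall fun y =>
      mul_nonneg (hrange _).1 (hrange _).1) ?_ (Filter.Eventually.of_forall fun y => ?_)
    · exact (integrableOn_const measure_closedBall_lt_top.ne).integrable_indicator
        measurableSet_closedBall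
    · by_cases hy : y ∈ B
      · rw [indicator_of_mem hy]
        exact mul_le_one₀ (hrange _).2 (hrange _).1 (hrange _).2
      · rw [indicator_of_notMem hy]
        have hny : 1/(2*r) < ‖y‖ := by
          simpa [hB, Metric.mem_closedBall, Prod.mk_zero_zero, dist_zero_right, not_le] using hy
        have : φ (r • y) = 0 := by
          by_contra h
          have := hsupp h
          rw [Metric.mem_ball, dist_zero_right, norm_smul, Real.norm_eq_abs,
            abs_of_pos hr0] at this
          have : ‖y‖ < 1/(2*r) := by
            rw [lt_div_iff₀ (by positivity), mul_comm]
            linarith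
          linarith
        simp [this]
  have hIint : (∫ y : ℝ × ℝ, B.indicator (fun _ => (1:ℝ)) y) = 1/r^2 := by
    rw [integral_indicator measurableSet_closedBall, setIntegral_const, smul_eq_mul, mul_one,
      measureReal_def, volume_cball (0,0) (1/(2*r)) (by positivity)]
    field_simp
  calc psiR φ r ξ ≤ r^4 * (1/r^2) := by
        unfold psiR
        exact mul_le_mul_of_nonneg_left (hIle.trans_eq hIint) (by positivity)
    _ = r^2 := by field_simp

lemma psiR_eq_zero (hsupp : Function.support φ ⊆ Metric.ball 0 (1/2)) (hr : 0 < r)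
    {ξ : ℝ × ℝ} (hξ : 1/r ≤ ‖ξ‖) : psiR φ r ξ = 0 := by
  have : ∀ y : ℝ × ℝ, φ (r • y) * φ (r • (ξ - y)) = 0 := by
    intro y
    by_contra h
    have h1 : φ (r • y) ≠ 0 := fun h' => h (by simp [h'])
    have h2 : φ (r • (ξ - y)) ≠ 0 := fun h' => h (by simp [h'])
    have n1 := hsupp h1
    have n2 := hsupp h2
    rw [Metric.mem_ball, dist_zero_right, norm_smul, Real.norm_eq_abs, abs_of_pos hr] at n1 n2
    have hy1 : ‖y‖ < 1/(2*r) := by rw [lt_div_iff₀ (by positivity)]; linarith [mul_comm r ‖y‖]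
    have hy2 : ‖ξ - y‖ < 1/(2*r) := by
      rw [lt_div_iff₀ (by positivity)]; linarith [mul_comm r ‖ξ - y‖]
    have : ‖ξ‖ < 1/r := by
      calc ‖ξ‖ ≤ ‖y‖ + ‖ξ - y‖ := by
            simpa using norm_add_le y (ξ - y)
        _ < 1/(2*r) + 1/(2*r) := by linarith
        _ = 1/r := by field_simp; norm_num
    linarith
  unfold psiR
  simp [this]

lemma psiR_continuous (hsm : ContDiff ℝ (⊤ : ℕ∞) φ)
    (hsupp : Function.support φ ⊆ Metric.ball 0 (1/2)) (hr : 0 < r) :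
    Continuous (psiR φ r) := by
  have hg : Continuous (fun y : ℝ × ℝ => φ (r • y)) :=
    hsm.continuous.comp (continuous_const_smul r)
  have hcs : HasCompactSupport (fun y : ℝ × ℝ => φ (r • y)) := by
    apply HasCompactSupport.of_support_subset_isCompact
      (isCompact_closedBall (0 : ℝ×ℝ) (1/(2*r)))
    intro y hy
    have := hsupp hy
    rw [Metric.mem_ball, dist_zero_right, norm_smul, Real.norm_eq_abs, abs_of_pos hr] at this
    rw [Metric.mem_closedBall, dist_zero_right]
    rw [le_div_iff₀ (by positivity)]
    nlinarith [norm_nonneg y]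
  have : psiR φ r = fun ξ => r ^ 4 *
      MeasureTheory.convolution (fun y : ℝ × ℝ => φ (r • y)) (fun y : ℝ × ℝ => φ (r • y))
        (ContinuousLinearMap.mul ℝ ℝ) volume ξ := by
    funext ξ
    rfl
  rw [this]
  exact continuous_const.mul
    (hcs.continuous_convolution_right _
      (hg.integrable_of_hasCompactSupport hcs).locallyIntegrable hg)

end aux

lemma card_filter_le (N : ℕ) (c δ : ℝ) (hδ : 0 ≤ δ) :
    (((Finset.Icc 1 N).filter (fun k : ℕ => |(k:ℝ) - c| < δ)).card : ℝ) ≤ 2*δ + 1 := by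
  set T := (Finset.Icc 1 N).filter (fun k : ℕ => |(k:ℝ) - c| < δ) with hT
  rcases T.eq_empty_or_nonempty with h | h
  · simp [h]; positivity
  · set m := T.min' h with hm
    have hmT : m ∈ T := T.min'_mem h
    have hmc : |(m:ℝ) - c| < δ := (Finset.mem_filter.1 hmT).2
    have hsub : T ⊆ Finset.Icc m (m + ⌊2*δ⌋₊) := by
      intro k hk
      have hkc : |(k:ℝ) - c| < δ := (Finset.mem_filter.1 hk).2
      have hmk : m ≤ k := T.min'_le k hk
      rw [Finset.mem_Icc]
      refine ⟨hmk, ?_⟩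
      have h1 : ((k - m : ℕ) : ℝ) ≤ 2*δ := by
        rw [Nat.cast_sub hmk]
        have := abs_sub_abs_le_abs_sub ((k:ℝ) - c) ((m:ℝ) - c)
        have h2 := abs_sub_le ((k:ℝ) - c) 0 ((m:ℝ) - c)
        cases abs_cases ((k:ℝ) - (m:ℝ)) with
        | inl hcase => nlinarith [abs_nonneg ((k:ℝ)-c), neg_abs_le ((k:ℝ)-c),
            le_abs_self ((m:ℝ)-c), neg_abs_le ((m:ℝ)-c), le_abs_self ((k:ℝ)-c)]
        | inr hcase => nlinarith
      have := Nat.le_floor h1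
      omega
    calc (T.card : ℝ) ≤ ((Finset.Icc m (m + ⌊2*δ⌋₊)).card : ℝ) := by
          exact_mod_cast Finset.card_le_card hsub
      _ = (⌊2*δ⌋₊ : ℝ) + 1 := by
          rw [Nat.card_Icc, show m + ⌊2*δ⌋₊ + 1 - m = ⌊2*δ⌋₊ + 1 by omega]; push_cast; ring
      _ ≤ 2*δ + 1 := by linarith [Nat.floor_le (by positivity : (0:ℝ) ≤ 2*δ) (R := ℝ)]

/-- The `L⁴` estimate for the sum of translates of `ψ_r` along the rescaled parabola:
`∫_{B₂} |Σ_k ψ_r(ξ − (k/N, k²/N²))|⁴ ≤ C N⁴ r³` for `1 ≤ r ≤ N`. -/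
theorem statement12 (φ : ℝ × ℝ → ℝ) (hsm : ContDiff ℝ (⊤ : ℕ∞) φ)
    (hrange : ∀ x, φ x ∈ Icc (0 : ℝ) 1)
    (hsupp : Function.support φ ⊆ Metric.ball 0 (1/2)) :
    ∃ C : ℝ, 0 < C ∧
    ∀ N : ℕ, 1 ≤ N → ∀ r : ℝ, 1 ≤ r → r ≤ (N : ℝ) →
      ∫ ξ in Metric.ball (0 : ℝ × ℝ) 2,
          |∑ k ∈ Finset.Icc 1 N, psiR φ r (ξ - ((k : ℝ) / N, (k : ℝ) ^ 2 / (N : ℝ) ^ 2))| ^ 4 ≤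
        C * (N : ℝ) ^ 4 * r ^ 3 := by
  refine ⟨180, by norm_num, ?_⟩
  intro N hN r hr1 hrN
  have hr0 : (0:ℝ) < r := lt_of_lt_of_le one_pos hr1
  have hN0 : (0:ℝ) < N := by exact_mod_cast hN
  have hd1 : (1:ℝ) ≤ (N:ℝ)/r := (one_le_div hr0).2 hrN
  have hdr : (N:ℝ)/r * r = N := div_mul_cancel₀ _ (ne_of_gt hr0)
  set P : ℕ → ℝ × ℝ := fun k => ((k:ℝ)/(N:ℝ), (k:ℝ)^2/(N:ℝ)^2) with hP
  set S : ℝ × ℝ → ℝ := fun ξ => ∑ k ∈ Finset.Icc 1 N, psiR φ r (ξ - P k) with hS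
  have hψc : Continuous (psiR φ r) := psiR_continuous hsm hsupp hr0
  have hψk : ∀ k : ℕ, Continuous (fun ξ : ℝ × ℝ => psiR φ r (ξ - P k)) :=
    fun k => hψc.comp (continuous_id.sub continuous_const)
  have hScont : Continuous S := continuous_finset_sum _ fun k _ => hψk k
  have hSnn : ∀ ξ, 0 ≤ S ξ :=
    fun ξ => Finset.sum_nonneg fun k _ => psiR_nonneg hrange hr0.le _
  -- localization in the first coordinate
  have hne : ∀ (k : ℕ) (ξ : ℝ × ℝ), psiR φ r (ξ - P k) ≠ 0 → |(k:ℝ) - N*ξ.1| < (N:ℝ)/r := by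
    intro k ξ h
    have hnorm : ‖ξ - P k‖ < 1/r := by
      by_contra h'
      exact h (psiR_eq_zero hsupp hr0 (le_of_not_gt h'))
    have h1 : |(ξ - P k).1| < 1/r := lt_of_le_of_lt (norm_fst_le (ξ - P k)) hnorm
    have h2 : (ξ - P k).1 = ξ.1 - (k:ℝ)/N := rfl
    have h3 : (k:ℝ) - N*ξ.1 = -((N:ℝ)*(ξ.1 - (k:ℝ)/N)) := by field_simp; ring
    rw [h3, abs_neg, abs_mul, abs_of_pos hN0]
    calc (N:ℝ) * |ξ.1 - (k:ℝ)/N| < N * (1/r) := by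
          rw [h2] at h1
          exact mul_lt_mul_of_pos_left h1 hN0
      _ = (N:ℝ)/r := by ring
  -- sup bound
  have hSsup : ∀ ξ, S ξ ≤ 3*N*r := by
    intro ξ
    have hfilter : S ξ = ∑ k ∈ (Finset.Icc 1 N).filter
        (fun k : ℕ => |(k:ℝ) - N*ξ.1| < (N:ℝ)/r), psiR φ r (ξ - P k) :=
      (Finset.sum_filter_of_ne (fun k _ h => hne k ξ h)).symm
    rw [hfilter]
    calc (∑ k ∈ (Finset.Icc 1 N).filter (fun k : ℕ => |(k:ℝ) - N*ξ.1| < (N:ℝ)/r),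
            psiR φ r (ξ - P k))
        ≤ ∑ _k ∈ (Finset.Icc 1 N).filter (fun k : ℕ => |(k:ℝ) - N*ξ.1| < (N:ℝ)/r), r^2 :=
          Finset.sum_le_sum fun k _ => psiR_le hrange hsupp hr1 _
      _ = (((Finset.Icc 1 N).filter (fun k : ℕ => |(k:ℝ) - N*ξ.1| < (N:ℝ)/r)).card : ℝ) * r^2 := by
          rw [Finset.sum_const, nsmul_eq_mul]
      _ ≤ (2*((N:ℝ)/r) + 1) * r^2 := by
          refine mul_le_mul_of_nonneg_right ?_ (sq_nonneg r)
          exact card_filter_le N (N*ξ.1) ((N:ℝ)/r) (by positivity)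
      _ ≤ 3*N*r := by nlinarith [sq_nonneg r, mul_nonneg (sub_nonneg.2 hd1) (sq_nonneg r)]
  -- integrability on the ball
  have hIntOn : ∀ f : ℝ × ℝ → ℝ, Continuous f → IntegrableOn f (Metric.ball (0:ℝ×ℝ) 2) :=
    fun f hf => (hf.continuousOn.integrableOn_compact
      (isCompact_closedBall (0:ℝ×ℝ) 2)).mono_set Metric.ball_subset_closedBall
  -- pairwise bound
  have hpair : ∀ j ∈ Finset.Icc 1 N, ∀ k ∈ Finset.Icc 1 N,
      (∫ ξ in Metric.ball (0:ℝ×ℝ) 2, psiR φ r (ξ - P j) * psiR φ r (ξ - P k)) ≤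
        (if |(k:ℝ) - (j:ℝ)| < 2*(N:ℝ)/r then 4*r^2 else 0) := by
    intro j _ k _
    split_ifs with hjk
    · have hpt : ∀ ξ : ℝ × ℝ, psiR φ r (ξ - P j) * psiR φ r (ξ - P k) ≤
          (Metric.closedBall (P k) (1/r)).indicator (fun _ => r^4) ξ := by
        intro ξ
        by_cases hmem : ξ ∈ Metric.closedBall (P k) (1/r)
        · rw [indicator_of_mem hmem]
          calc psiR φ r (ξ - P j) * psiR φ r (ξ - P k) ≤ r^2 * r^2 :=
                mul_le_mul (psiR_le hrange hsupp hr1 _) (psiR_le hrange hsupp hr1 _)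
                  (psiR_nonneg hrange hr0.le _) (by positivity)
            _ = r^4 := by ring
        · rw [indicator_of_notMem hmem]
          have : 1/r ≤ ‖ξ - P k‖ := by
            rw [Metric.mem_closedBall, not_le, dist_eq_norm] at hmem
            exact hmem.le
          rw [psiR_eq_zero hsupp hr0 this, mul_zero]
      have hind : Integrable ((Metric.closedBall (P k) (1/r)).indicator
          (fun _ : ℝ×ℝ => r^4)) volume :=
        (integrableOn_const measure_closedBall_lt_top.ne).integrable_indicator
          measurableSet_closedBall
      calc (∫ ξ in Metric.ball (0:ℝ×ℝ) 2, psiR φ r (ξ - P j) * psiR φ r (ξ - P k))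
          ≤ ∫ ξ in Metric.ball (0:ℝ×ℝ) 2,
              (Metric.closedBall (P k) (1/r)).indicator (fun _ => r^4) ξ :=
            integral_mono_of_nonneg
              (Filter.Eventually.of_forall fun ξ =>
                mul_nonneg (psiR_nonneg hrange hr0.le _) (psiR_nonneg hrange hr0.le _))
              hind.integrableOn
              (Filter.Eventually.of_forall hpt)
        _ ≤ ∫ ξ, (Metric.closedBall (P k) (1/r)).indicator (fun _ => r^4) ξ :=
            setIntegral_le_integral hind
              (Filter.Eventually.of_forall fun ξ => indicator_nonneg (fun _ _ => by positivity) ξ)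
        _ = (volume (Metric.closedBall (P k) (1/r))).toReal * r^4 := by
            rw [integral_indicator measurableSet_closedBall, setIntegral_const, smul_eq_mul, measureReal_def]
        _ = 4*r^2 := by
            rw [volume_cball (P k) (1/r) (by positivity)]
            field_simp
            ring
    · have hz : ∀ ξ : ℝ × ℝ, psiR φ r (ξ - P j) * psiR φ r (ξ - P k) = 0 := by
        intro ξ
        by_contra h
        have hj' : psiR φ r (ξ - P j) ≠ 0 := fun h' => h (by simp [h'])
        have hk' : psiR φ r (ξ - P k) ≠ 0 := fun h' => h (by simp [h'])
        have a1 := hne j ξ hj'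
        have a2 := hne k ξ hk'
        have : |(k:ℝ) - (j:ℝ)| < 2*(N:ℝ)/r := by
          have h4 := abs_sub_le ((k:ℝ)) (N*ξ.1) ((j:ℝ))
          have h5 : |(N:ℝ)*ξ.1 - (j:ℝ)| = |(j:ℝ) - N*ξ.1| := abs_sub_comm _ _
          have h6 : 2*(N:ℝ)/r = (N:ℝ)/r + (N:ℝ)/r := by ring
          calc |(k:ℝ) - (j:ℝ)| ≤ |(k:ℝ) - N*ξ.1| + |(N:ℝ)*ξ.1 - (j:ℝ)| := h4
            _ < (N:ℝ)/r + (N:ℝ)/r := by rw [h5]; exact add_lt_add a2 a1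
            _ = 2*(N:ℝ)/r := h6.symm
        exact hjk this
      simp only [hz, integral_zero]
      exact le_refl 0
  -- L² bound
  have hL2 : (∫ ξ in Metric.ball (0:ℝ×ℝ) 2, (S ξ)^2) ≤ 20*(N:ℝ)^2*r := by
    have hexp : ∀ ξ, (S ξ)^2 = ∑ j ∈ Finset.Icc 1 N, ∑ k ∈ Finset.Icc 1 N,
        psiR φ r (ξ - P j) * psiR φ r (ξ - P k) := by
      intro ξ
      rw [hS, sq, Finset.sum_mul_sum]
    calc (∫ ξ in Metric.ball (0:ℝ×ℝ) 2, (S ξ)^2)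
        = ∑ j ∈ Finset.Icc 1 N, ∑ k ∈ Finset.Icc 1 N,
            ∫ ξ in Metric.ball (0:ℝ×ℝ) 2, psiR φ r (ξ - P j) * psiR φ r (ξ - P k) := by
          simp only [hexp]
          rw [integral_finset_sum _ fun j _ => integrable_finset_sum _
            fun k _ => hIntOn (fun ξ => psiR φ r (ξ - P j) * psiR φ r (ξ - P k)) ((hψk j).mul (hψk k))]
          exact Finset.sum_congr rfl fun j _ =>
            integral_finset_sum _ fun k _ => hIntOn (fun ξ => psiR φ r (ξ - P j) * psiR φ r (ξ - P k)) ((hψk j).mul (hψk k))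
      _ ≤ ∑ j ∈ Finset.Icc 1 N, ∑ k ∈ Finset.Icc 1 N,
            (if |(k:ℝ) - (j:ℝ)| < 2*(N:ℝ)/r then 4*r^2 else 0) :=
          Finset.sum_le_sum fun j hj => Finset.sum_le_sum fun k hk => hpair j hj k hk
      _ ≤ ∑ _j ∈ Finset.Icc 1 N, 20*(N:ℝ)*r := by
          refine Finset.sum_le_sum fun j _ => ?_
          rw [Finset.sum_ite, Finset.sum_const, Finset.sum_const_zero, add_zero, nsmul_eq_mul]
          have hcard := card_filter_le N ((j:ℝ)) (2*(N:ℝ)/r) (by positivity)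
          have : (((Finset.Icc 1 N).filter
              (fun k : ℕ => |(k:ℝ) - (j:ℝ)| < 2*(N:ℝ)/r)).card : ℝ) * (4*r^2)
              ≤ (2*(2*(N:ℝ)/r)+1) * (4*r^2) :=
            mul_le_mul_of_nonneg_right hcard (by positivity)
          refine this.trans ?_
          have e : (2*(2*(N:ℝ)/r)+1)*(4*r^2) = 16*(N:ℝ)*r + 4*r^2 := by field_simp; ring
          rw [e]
          nlinarith [mul_nonneg hr0.le (sub_nonneg.2 hrN)]
      _ = 20*(N:ℝ)^2*r := by
          rw [Finset.sum_const, Nat.card_Icc, nsmul_eq_mul]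
          push_cast [Nat.add_sub_cancel]
          ring
  -- assembly
  have final : (∫ ξ in Metric.ball (0:ℝ×ℝ) 2, |S ξ|^4) ≤ 180*(N:ℝ)^4*r^3 := by
    calc (∫ ξ in Metric.ball (0:ℝ×ℝ) 2, |S ξ|^4)
        ≤ ∫ ξ in Metric.ball (0:ℝ×ℝ) 2, (3*(N:ℝ)*r)^2 * (S ξ)^2 := by
          refine integral_mono_of_nonneg
            (Filter.Eventually.of_forall fun ξ => by positivity)
            ((hIntOn _ (continuous_const.mul (hScont.pow 2))))
            (Filter.Eventually.of_forall fun ξ => ?_)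
          show |S ξ|^4 ≤ (3*(N:ℝ)*r)^2 * (S ξ)^2
          have h1 : |S ξ|^4 = (S ξ)^2 * (S ξ)^2 := by
            rw [abs_of_nonneg (hSnn ξ)]; ring
          rw [h1]
          exact mul_le_mul_of_nonneg_right
            (pow_le_pow_left₀ (hSnn ξ) (hSsup ξ) 2) (sq_nonneg _)
      _ = (3*(N:ℝ)*r)^2 * ∫ ξ in Metric.ball (0:ℝ×ℝ) 2, (S ξ)^2 := integral_const_mul _ _
      _ ≤ (3*(N:ℝ)*r)^2 * (20*(N:ℝ)^2*r) :=
          mul_le_mul_of_nonneg_left hL2 (by positivity)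
      _ = 180*(N:ℝ)^4*r^3 := by ring
  simpa only [hS, hP] using final


end
end
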